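/- arXiv:1904.03432 — 2 statements merged into one kernel-verified Lean document; each statement's English description precedes it below -/
import Mathlib

section
/- For every τ in the upper half-plane with Im τ ≥ 1.5, one has |χ(τ) − q^{−1}| < 7299 and |ξ(τ) − q^{−1}| < 7258, where q = e^{2πiτ}. -/
open Complex

noncomputable section

/-- `sigma' k n = ∑_{d ∣ n} d^k`, the sum of the k-th powers of the positive divisors of n. -/
def sigma' (k n : ℕ) : ℕ := ∑ d ∈ n.divisors, d ^ k

/-- `qpar τ = e^{2πiτ}`. -/
def qpar (τ : ℂ) : ℂ := Complex.exp (2 * Real.pi * Complex.I * τ)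

/-- The quasimodular Eisenstein series `E₂(τ) = 1 - 24 ∑_{n≥1} σ₁(n) qⁿ`. -/
def E2 (τ : ℂ) : ℂ := 1 - 24 * ∑' n : ℕ, (sigma' 1 (n + 1) : ℂ) * qpar τ ^ (n + 1)

/-- The Eisenstein series `E₄(τ) = 1 + 240 ∑_{n≥1} σ₃(n) qⁿ`. -/
def E4 (τ : ℂ) : ℂ := 1 + 240 * ∑' n : ℕ, (sigma' 3 (n + 1) : ℂ) * qpar τ ^ (n + 1)

/-- The Eisenstein series `E₆(τ) = 1 - 504 ∑_{n≥1} σ₅(n) qⁿ`. -/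
def E6 (τ : ℂ) : ℂ := 1 - 504 * ∑' n : ℕ, (sigma' 5 (n + 1) : ℂ) * qpar τ ^ (n + 1)

/-- The modular discriminant `Δ = (E₄³ - E₆²)/1728`. -/
def Δ' (τ : ℂ) : ℂ := (E4 τ ^ 3 - E6 τ ^ 2) / 1728

/-- The modular j-invariant `j = E₄³/Δ`. -/
def jinv (τ : ℂ) : ℂ := E4 τ ^ 3 / Δ' τ

/-- `χ = E₂E₄E₆/Δ`. -/
def χ' (τ : ℂ) : ℂ := E2 τ * E4 τ * E6 τ / Δ' τ

/-- `ξ = E₄E₆/Δ`. -/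
def ξ' (τ : ℂ) : ℂ := E4 τ * E6 τ / Δ' τ

/-- The almost holomorphic modular function `χ*(τ) = χ(τ) - (3/(π Im τ)) ξ(τ)`. -/
def χstar (τ : ℂ) : ℂ := χ' τ - (3 / (Real.pi * τ.im) : ℝ) * ξ' τ

/-- `τ` lies in the upper half-plane and satisfies `aτ² + bτ + c = 0` where
`a > 0` and `gcd(a,b,c) = 1`. -/
def QuadPoint (τ : ℂ) (a b c : ℤ) : Prop :=
  0 < τ.im ∧ 0 < a ∧ Int.gcd (Int.gcd a b) c = 1 ∧
    (a : ℂ) * τ ^ 2 + (b : ℂ) * τ + (c : ℂ) = 0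

/-- `τ` is a quadratic point of the upper half-plane. -/
def IsQuadratic (τ : ℂ) : Prop := ∃ a b c : ℤ, QuadPoint τ a b c

/-- `τ` is a quadratic point of discriminant `D = b² - 4ac`. -/
def HasDisc (τ : ℂ) (D : ℤ) : Prop :=
  ∃ a b c : ℤ, QuadPoint τ a b c ∧ D = b ^ 2 - 4 * a * c

/-- Membership in the closed standard fundamental domain
`F = {z ∈ ℍ : |z| ≥ 1, -1/2 ≤ Re z ≤ 1/2}`. -/
def inF (τ : ℂ) : Prop :=
  0 < τ.im ∧ 1 ≤ ‖τ‖ ∧ -(1 / 2) ≤ τ.re ∧ τ.re ≤ 1 / 2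

/-- `τ` and `τ'` lie in the same `SL₂(ℤ)`-orbit under Möbius transformations. -/
def MoebiusEquiv (τ τ' : ℂ) : Prop :=
  ∃ γ : Matrix.SpecialLinearGroup (Fin 2) ℤ,
    τ' = ((γ.1 0 0 : ℂ) * τ + (γ.1 0 1 : ℂ)) / ((γ.1 1 0 : ℂ) * τ + (γ.1 1 1 : ℂ))

/-!
For `Im τ ≥ 3/2`, `|q| = e^{-2π Im τ} ≤ e^{-3π} < 1/8000`. Since `σ_k(n) ≤ 2^{(k+1)(n-1)}`, the series
`∑ σ_k(n) qⁿ` is `q + O(q²)` with explicit constants, so `E₂, E₄, E₆` are `1 + O(q)` and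
`Δ = q + O(q²)`. For `F = E₂E₄E₆` and `F = E₄E₆` the difference `F/Δ - q⁻¹` is then bounded by
`(‖F - 1‖/|q| + ‖Δ - q‖/|q|²) / (1 - ‖Δ - q‖/|q|)`.
-/

def sigmaSeries (k : ℕ) (q : ℂ) : ℂ := ∑' n : ℕ, (sigma' k (n + 1) : ℂ) * q ^ (n + 1)

lemma sigma'_succ_le (k n : ℕ) : sigma' k (n + 1) ≤ (2 ^ (k + 1)) ^ n := by
  have hcard : (n + 1).divisors.card ≤ n + 1 := Nat.card_divisors_le_self _
  calc sigma' k (n + 1) ≤ ∑ _d ∈ (n + 1).divisors, (n + 1) ^ k :=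
        Finset.sum_le_sum fun d hd => Nat.pow_le_pow_left (Nat.divisor_le hd) k
    _ ≤ (n + 1) * (n + 1) ^ k := by
        rw [Finset.sum_const, smul_eq_mul]; gcongr
    _ = (n + 1) ^ (k + 1) := by ring
    _ ≤ (2 ^ n) ^ (k + 1) := Nat.pow_le_pow_left Nat.lt_two_pow_self _
    _ = (2 ^ (k + 1)) ^ n := by rw [← pow_mul, ← pow_mul, Nat.mul_comm]

lemma norm_sigma_term_le (k n : ℕ) (q : ℂ) :
    ‖(sigma' k (n + 1) : ℂ) * q ^ (n + 1)‖ ≤ ‖q‖ * ((2 : ℝ) ^ (k + 1) * ‖q‖) ^ n := by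
  have hσ : (sigma' k (n + 1) : ℝ) ≤ ((2 : ℝ) ^ (k + 1)) ^ n := by
    exact_mod_cast sigma'_succ_le k n
  rw [norm_mul, norm_pow, Complex.norm_natCast, mul_pow, pow_succ]
  calc (sigma' k (n + 1) : ℝ) * (‖q‖ ^ n * ‖q‖)
      ≤ ((2 : ℝ) ^ (k + 1)) ^ n * (‖q‖ ^ n * ‖q‖) := by gcongr
    _ = ‖q‖ * (((2 : ℝ) ^ (k + 1)) ^ n * ‖q‖ ^ n) := by ring

section SigmaSeries

variable {k : ℕ} {q : ℂ}

lemma summable_sigma_term (hq : (2 : ℝ) ^ (k + 1) * ‖q‖ < 1) :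
    Summable fun n : ℕ => (sigma' k (n + 1) : ℂ) * q ^ (n + 1) :=
  .of_norm_bounded ((summable_geometric_of_lt_one (by positivity) hq).mul_left ‖q‖)
    (norm_sigma_term_le k · q)

/-- The tail after the leading term `q` is dominated by a geometric series of ratio
`2^(k+1) ‖q‖ ≤ 1/2`, whose sum is at most twice its first term. -/
lemma norm_sigmaSeries_sub_self_le (hq : (2 : ℝ) ^ (k + 1) * ‖q‖ ≤ 1 / 2) :
    ‖sigmaSeries k q - q‖ ≤ 2 ^ (k + 2) * ‖q‖ ^ 2 := by
  set r := (2 : ℝ) ^ (k + 1) * ‖q‖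
  have hr0 : 0 ≤ r := by positivity
  have hr1 : r < 1 := by linarith
  have htail : sigmaSeries k q - q = ∑' n : ℕ, (sigma' k (n + 2) : ℂ) * q ^ (n + 2) := by
    rw [sigmaSeries, (summable_sigma_term hr1).tsum_eq_zero_add]
    simp [sigma']
  have hgeom : HasSum (fun n : ℕ => ‖q‖ * r * r ^ n) (‖q‖ * r * (1 - r)⁻¹) :=
    (hasSum_geometric_of_lt_one hr0 hr1).mul_left _
  have hinv : (1 - r)⁻¹ ≤ 2 := by
    rw [inv_le_comm₀ (by linarith) (by norm_num)]; linarith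
  rw [htail]
  calc ‖∑' n : ℕ, (sigma' k (n + 2) : ℂ) * q ^ (n + 2)‖
      ≤ ‖q‖ * r * (1 - r)⁻¹ :=
        tsum_of_norm_bounded hgeom fun n => (norm_sigma_term_le k (n + 1) q).trans_eq (by ring)
    _ ≤ ‖q‖ * r * 2 := by gcongr
    _ = 2 ^ (k + 2) * ‖q‖ ^ 2 := by ring

lemma norm_sigmaSeries_le (hq : (2 : ℝ) ^ (k + 1) * ‖q‖ ≤ 1 / 2) :
    ‖sigmaSeries k q‖ ≤ 2 * ‖q‖ := by
  have htail := norm_sigmaSeries_sub_self_le hq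
  have hsplit := norm_add_le (sigmaSeries k q - q) q
  rw [sub_add_cancel] at hsplit
  have hq2 : (2 : ℝ) ^ (k + 2) * ‖q‖ ≤ 1 := by rw [pow_succ]; linarith
  nlinarith [norm_nonneg q]

end SigmaSeries

lemma norm_mul_sub_one_le {R : Type*} [SeminormedRing R] {x y : R} {a b ε : ℝ}
    (hx : ‖x - 1‖ ≤ a * ε) (hy : ‖y - 1‖ ≤ b * ε) :
    ‖x * y - 1‖ ≤ (a + b + a * b * ε) * ε := by
  have hxy : ‖(x - 1) * (y - 1)‖ ≤ a * ε * (b * ε) :=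
    (norm_mul_le _ _).trans (mul_le_mul hx hy (norm_nonneg _) ((norm_nonneg _).trans hx))
  calc ‖x * y - 1‖ = ‖(x - 1) * (y - 1) + (x - 1) + (y - 1)‖ := by congr 1; noncomm_ring
    _ ≤ a * ε * (b * ε) + a * ε + b * ε := norm_add₃_le.trans (by gcongr)
    _ = (a + b + a * b * ε) * ε := by ring

/-- `F/D - q⁻¹ = (q (F - 1) - (D - q)) / (q D)`, and `‖D‖ ≥ ‖q‖ (1 - K ‖q‖)`. -/
lemma norm_div_sub_inv_le {𝕜 : Type*} [NormedField 𝕜] {F D q : 𝕜} {a K : ℝ} (hq : q ≠ 0)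
    (hF : ‖F - 1‖ ≤ a * ‖q‖) (hD : ‖D - q‖ ≤ K * ‖q‖ ^ 2) (hK : K * ‖q‖ < 1) :
    ‖F / D - q⁻¹‖ ≤ (a + K) / (1 - K * ‖q‖) := by
  have hq0 : 0 < ‖q‖ := norm_pos_iff.mpr hq
  have hDlow : ‖q‖ * (1 - K * ‖q‖) ≤ ‖D‖ := by
    have := norm_sub_norm_le q (q - D)
    rw [sub_sub_cancel, norm_sub_rev] at this
    nlinarith
  have hDpos : 0 < ‖D‖ := lt_of_lt_of_le (by nlinarith) hDlow
  have hD0 : D ≠ 0 := norm_pos_iff.mp hDpos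
  have hnum : ‖q * (F - 1) - (D - q)‖ ≤ (a + K) * ‖q‖ ^ 2 := by
    calc ‖q * (F - 1) - (D - q)‖ ≤ ‖q‖ * (a * ‖q‖) + K * ‖q‖ ^ 2 := by
          refine (norm_sub_le _ _).trans (add_le_add ?_ hD)
          rw [norm_mul]; gcongr
      _ = (a + K) * ‖q‖ ^ 2 := by ring
  have hid : F / D - q⁻¹ = (q * (F - 1) - (D - q)) / (q * D) := by field_simp; ring
  rw [hid, norm_div, norm_mul, div_le_div_iff₀ (by positivity) (by linarith)]
  calc ‖q * (F - 1) - (D - q)‖ * (1 - K * ‖q‖) ≤ (a + K) * ‖q‖ ^ 2 * (1 - K * ‖q‖) := by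
        gcongr
    _ = (a + K) * (‖q‖ * (‖q‖ * (1 - K * ‖q‖))) := by ring
    _ ≤ (a + K) * (‖q‖ * ‖D‖) := by
        have : 0 ≤ a + K := by nlinarith [norm_nonneg (q * (F - 1) - (D - q)), pow_pos hq0 2]
        gcongr

/-- `‖q‖ = e^{-2π Im τ} ≤ e^{-9}`, and `e⁹ > 8000`. -/
lemma norm_qpar_le {τ : ℂ} (hτ : 1.5 ≤ τ.im) : ‖qpar τ‖ ≤ 1 / 8000 := by
  have hnorm : ‖qpar τ‖ = Real.exp (-(2 * Real.pi * τ.im)) := by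
    simp [qpar, Complex.norm_exp, Complex.mul_re]
  have hexp9 : (8000 : ℝ) < Real.exp 9 := by
    have h := pow_lt_pow_left₀ Real.exp_one_gt_d9 (by norm_num) (by norm_num : 9 ≠ 0)
    rw [← Real.exp_nat_mul] at h
    norm_num at h ⊢
    linarith
  rw [hnorm, one_div, Real.exp_neg, inv_le_inv₀ (Real.exp_pos _) (by norm_num)]
  refine hexp9.le.trans (Real.exp_le_exp.mpr ?_)
  nlinarith [Real.pi_gt_three]

section Eisenstein

variable {τ : ℂ}

lemma norm_E2_sub_one_le (hq : ‖qpar τ‖ ≤ 1 / 8) : ‖E2 τ - 1‖ ≤ 48 * ‖qpar τ‖ := by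
  have h := norm_sigmaSeries_le (k := 1) (q := qpar τ) (by linarith)
  calc ‖E2 τ - 1‖ = 24 * ‖sigmaSeries 1 (qpar τ)‖ := by simp [E2, sigmaSeries]
    _ ≤ 48 * ‖qpar τ‖ := by linarith

lemma norm_E4_sub_one_le (hq : ‖qpar τ‖ ≤ 1 / 32) : ‖E4 τ - 1‖ ≤ 480 * ‖qpar τ‖ := by
  have h := norm_sigmaSeries_le (k := 3) (q := qpar τ) (by linarith)
  calc ‖E4 τ - 1‖ = 240 * ‖sigmaSeries 3 (qpar τ)‖ := by simp [E4, sigmaSeries]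
    _ ≤ 480 * ‖qpar τ‖ := by linarith

lemma norm_E6_sub_one_le (hq : ‖qpar τ‖ ≤ 1 / 128) : ‖E6 τ - 1‖ ≤ 1008 * ‖qpar τ‖ := by
  have h := norm_sigmaSeries_le (k := 5) (q := qpar τ) (by linarith)
  calc ‖E6 τ - 1‖ = 504 * ‖sigmaSeries 5 (qpar τ)‖ := by simp [E6, sigmaSeries]
    _ ≤ 1008 * ‖qpar τ‖ := by linarith

/-- With `E₄ = 1 + 240 B` and `E₆ = 1 - 504 C`, the linear part of `Δ` is `(720 B + 1008 C)/1728`,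
which is `q + O(q²)` because `B` and `C` both start with `q`. -/
lemma norm_Δ'_sub_qpar_le (hq : ‖qpar τ‖ ≤ 1 / 8000) :
    ‖Δ' τ - qpar τ‖ ≤ 1085 * ‖qpar τ‖ ^ 2 := by
  set q := qpar τ
  set B := sigmaSeries 3 q
  set C := sigmaSeries 5 q
  have hB := norm_sigmaSeries_le (k := 3) (q := q) (by linarith)
  have hC := norm_sigmaSeries_le (k := 5) (q := q) (by linarith)
  have hB' := norm_sigmaSeries_sub_self_le (k := 3) (q := q) (by linarith)
  have hC' := norm_sigmaSeries_sub_self_le (k := 5) (q := q) (by linarith)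
  have hΔ : Δ' τ - q =
      5 / 12 * (B - q) + 7 / 12 * (C - q) + 100 * B ^ 2 + 8000 * B ^ 3 - 147 * C ^ 2 := by
    change ((1 + 240 * B) ^ 3 - (1 - 504 * C) ^ 2) / 1728 - q = _
    ring
  have hq3 : ‖q‖ ^ 3 ≤ ‖q‖ ^ 2 / 8000 := by
    nlinarith [mul_le_mul_of_nonneg_left hq (sq_nonneg ‖q‖)]
  rw [hΔ]
  calc ‖5 / 12 * (B - q) + 7 / 12 * (C - q) + 100 * B ^ 2 + 8000 * B ^ 3 - 147 * C ^ 2‖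
      ≤ 5 / 12 * ‖B - q‖ + 7 / 12 * ‖C - q‖ + 100 * ‖B‖ ^ 2 + 8000 * ‖B‖ ^ 3
          + 147 * ‖C‖ ^ 2 := by
        refine (norm_sub_le _ _).trans (add_le_add (norm_add₄_le.trans_eq ?_) (le_of_eq ?_)) <;>
          simp [norm_pow]
    _ ≤ 5 / 12 * (2 ^ (3 + 2) * ‖q‖ ^ 2) + 7 / 12 * (2 ^ (5 + 2) * ‖q‖ ^ 2)
          + 100 * (2 * ‖q‖) ^ 2 + 8000 * (2 * ‖q‖) ^ 3 + 147 * (2 * ‖q‖) ^ 2 := by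
        gcongr
    _ ≤ 1085 * ‖q‖ ^ 2 := by nlinarith [sq_nonneg ‖q‖]

end Eisenstein

/-- For `Im τ ≥ 1.5`, `|χ(τ) - q⁻¹| < 7299` and `|ξ(τ) - q⁻¹| < 7258`. -/
theorem chi_xi_tail_bounds_medium (τ : ℂ) (hτ : 1.5 ≤ τ.im) :
    ‖χ' τ - (qpar τ)⁻¹‖ < 7299 ∧
    ‖ξ' τ - (qpar τ)⁻¹‖ < 7258 := by
  have hq := norm_qpar_le hτ
  have hq0 : qpar τ ≠ 0 := Complex.exp_ne_zero _
  have hK : 1085 * ‖qpar τ‖ < 1 := by linarith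
  have hΔ := norm_Δ'_sub_qpar_le hq
  have h4 := norm_E4_sub_one_le (τ := τ) (by linarith)
  have h6 := norm_E6_sub_one_le (τ := τ) (by linarith)
  have h46 : ‖E4 τ * E6 τ - 1‖ ≤ 1549 * ‖qpar τ‖ :=
    (norm_mul_sub_one_le h4 h6).trans (by gcongr; linarith)
  have h24 : ‖E2 τ * E4 τ - 1‖ ≤ 531 * ‖qpar τ‖ :=
    (norm_mul_sub_one_le (norm_E2_sub_one_le (by linarith)) h4).trans (by gcongr; linarith)
  have h246 : ‖E2 τ * E4 τ * E6 τ - 1‖ ≤ 1610 * ‖qpar τ‖ :=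
    (norm_mul_sub_one_le h24 h6).trans (by gcongr; linarith)
  constructor
  · calc ‖χ' τ - (qpar τ)⁻¹‖ ≤ (1610 + 1085) / (1 - 1085 * ‖qpar τ‖) :=
          norm_div_sub_inv_le hq0 h246 hΔ hK
      _ < 7299 := by rw [div_lt_iff₀ (by linarith)]; linarith
  · calc ‖ξ' τ - (qpar τ)⁻¹‖ ≤ (1549 + 1085) / (1 - 1085 * ‖qpar τ‖) :=
          norm_div_sub_inv_le hq0 h46 hΔ hK
      _ < 7258 := by rw [div_lt_iff₀ (by linarith)]; linarith
end
end

section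
/- For every τ in the upper half-plane with Im τ ≥ √3/2, one has |q/Δ(τ)| < 1.5, where q = e^{2πiτ}; in particular Δ(τ) ≠ 0 there. -/
open Complex

noncomputable section

/-!
By Mathlib's identity `Δ = (E₄³ - E₆²)/1728` and the product formula `Δ = q ∏ (1 - qⁿ)²⁴`,
`q/Δ = (∏ (1 - qⁿ))⁻²⁴`. For `Im τ ≥ √3/2` we have `|q| = e^{-2π Im τ} ≤ e^{-5} < 1/100`, and
`|∏ (1 - qⁿ) - 1| ≤ exp (∑ |q|ⁿ) - 1 ≤ 1/98`, so `|q/Δ| ≤ (97/98)⁻²⁴ < 3/2`.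
-/

open UpperHalfPlane ModularForm EisensteinSeries ArithmeticFunction
open scoped Real

lemma norm_tprod_one_add_sub_one_le {ι R : Type*} [NormedCommRing R] [NormOneClass R]
    [CompleteSpace R] {f : ι → R} (hf : Summable (‖f ·‖)) :
    ‖∏' i, (1 + f i) - 1‖ ≤ Real.exp (∑' i, ‖f i‖) - 1 := by
  refine le_of_tendsto ((multipliable_one_add_of_summable hf).hasProd.sub_const 1).norm
    (Filter.Eventually.of_forall fun s ↦ ?_)
  refine (s.norm_prod_one_add_sub_one_le f).trans ?_
  gcongr
  exact hf.sum_le_tsum s fun i _ ↦ norm_nonneg (f i)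

section OneSubPow

variable {𝕜 : Type*} [NormedField 𝕜] [CompleteSpace 𝕜] {q : 𝕜}

lemma norm_tprod_one_sub_pow_sub_one_le (hq : ‖q‖ < 1) :
    ‖∏' n : ℕ, (1 - q ^ (n + 1)) - 1‖ ≤ Real.exp (‖q‖ / (1 - ‖q‖)) - 1 := by
  have hgeom : HasSum (fun n : ℕ ↦ ‖q‖ ^ (n + 1)) (‖q‖ / (1 - ‖q‖)) := by
    simpa [pow_succ', div_eq_mul_inv] using
      (hasSum_geometric_of_lt_one (norm_nonneg q) hq).mul_left ‖q‖
  have hnorm : (fun n : ℕ ↦ ‖-q ^ (n + 1)‖) = fun n ↦ ‖q‖ ^ (n + 1) := by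
    ext n; rw [norm_neg, norm_pow]
  have := norm_tprod_one_add_sub_one_le (f := fun n ↦ -q ^ (n + 1)) (hnorm ▸ hgeom.summable)
  simpa only [hnorm, hgeom.tsum_eq, ← sub_eq_add_neg] using this

lemma two_thirds_lt_norm_tprod_one_sub_pow_pow (hq : ‖q‖ ≤ 1 / 100) :
    2 / 3 < ‖∏' n : ℕ, (1 - q ^ (n + 1))‖ ^ 24 := by
  set P := ∏' n : ℕ, (1 - q ^ (n + 1))
  have hx : ‖q‖ / (1 - ‖q‖) ≤ 1 / 99 := by
    rw [div_le_iff₀ (by linarith)]; linarith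
  have hexp : Real.exp (‖q‖ / (1 - ‖q‖)) ≤ 99 / 98 :=
    (Real.exp_bound_div_one_sub_of_interval (div_nonneg (norm_nonneg q) (by linarith))
      (by linarith)).trans
      (by rw [div_le_div_iff₀ (by linarith) (by norm_num)]; linarith)
  have hP : 97 / 98 ≤ ‖P‖ := by
    have hP1 := norm_tprod_one_sub_pow_sub_one_le (q := q) (by linarith)
    have := norm_sub_norm_le 1 P
    rw [norm_sub_rev, norm_one] at this
    linarith
  calc (2 / 3 : ℝ) < 1 + (24 : ℕ) * (-1 / 98) := by norm_num
    _ ≤ (1 + -1 / 98) ^ 24 := one_add_mul_le_pow (by norm_num) 24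
    _ ≤ ‖P‖ ^ 24 := by gcongr; linarith

end OneSubPow

lemma qpar_ne_zero (τ : ℂ) : qpar τ ≠ 0 := Complex.exp_ne_zero _

lemma qpar_eq_qParam (τ : ℂ) : qpar τ = Function.Periodic.qParam 1 τ := by
  simp [qpar, Function.Periodic.qParam]

lemma norm_qpar (τ : ℂ) : ‖qpar τ‖ = Real.exp (-(2 * π * τ.im)) := by
  rw [qpar, Complex.norm_exp]
  congr 1
  simp [Complex.mul_re, Complex.mul_im]

lemma norm_qpar_lt_one (z : ℍ) : ‖qpar z‖ < 1 := norm_exp_two_pi_I_lt_one z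

lemma norm_qpar_le_of_sqrt_three_div_two_le_im {τ : ℂ} (hτ : Real.sqrt 3 / 2 ≤ τ.im) :
    ‖qpar τ‖ ≤ 1 / 100 := by
  have hsqrt : (1.7 : ℝ) ≤ Real.sqrt 3 := Real.le_sqrt_of_sq_le (by norm_num)
  have h5 : 5 ≤ 2 * π * τ.im := by nlinarith [Real.pi_gt_three]
  have he5 : (100 : ℝ) ≤ Real.exp 5 :=
    calc (100 : ℝ) ≤ 2.7 ^ 5 := by norm_num
      _ ≤ Real.exp 1 ^ 5 := by gcongr; exact Real.exp_one_gt_d9.le.trans' (by norm_num)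
      _ = Real.exp 5 := by rw [← Real.exp_nat_mul]; norm_num
  rw [norm_qpar, Real.exp_neg, inv_le_comm₀ (Real.exp_pos _) (by norm_num)]
  calc (1 / 100 : ℝ)⁻¹ = 100 := by norm_num
    _ ≤ Real.exp 5 := he5
    _ ≤ Real.exp (2 * π * τ.im) := Real.exp_le_exp.mpr h5

lemma E_eq_one_sub_tsum_sigma' {k : ℕ} (hk : 3 ≤ k) (hk2 : Even k) (z : ℍ) :
    E hk z = 1 - (2 * k / bernoulli k : ℂ) *
      ∑' n : ℕ, (sigma' (k - 1) (n + 1) : ℂ) * qpar z ^ (n + 1) := by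
  rw [q_expansion_bernoulli hk hk2 z, ← tsum_pnat_eq_tsum_succ
    (f := fun n ↦ (sigma' (k - 1) n : ℂ) * qpar z ^ n)]
  simp [sigma', sigma_apply, qpar]

lemma E4_eq_E₄ (z : ℍ) : E4 z = E₄ z := by
  rw [E_eq_one_sub_tsum_sigma' _ ⟨2, rfl⟩, E4, show bernoulli 4 = -1 / 30 by decide +kernel]
  norm_num

lemma E6_eq_E₆ (z : ℍ) : E6 z = E₆ z := by
  rw [E_eq_one_sub_tsum_sigma' _ ⟨3, rfl⟩, E6, show bernoulli 6 = 1 / 42 by decide +kernel]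
  norm_num

lemma Δ'_eq_discriminant (z : ℍ) : Δ' z = discriminant z := by
  rw [discriminant_eq_E₄_cube_sub_E₆_sq, Δ', E4_eq_E₄, E6_eq_E₆]

lemma Δ'_eq_qpar_mul_tprod_pow (z : ℍ) :
    Δ' z = qpar z * (∏' n : ℕ, (1 - qpar z ^ (n + 1))) ^ 24 := by
  rw [Δ'_eq_discriminant, discriminant_eq_q_prod,
    ← (multipliable_one_sub_pow (norm_qpar_lt_one z)).tprod_pow]
  simp only [eta_q, qpar_eq_qParam]

lemma norm_qpar_div_Δ' (z : ℍ) :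
    ‖qpar z / Δ' z‖ = (‖∏' n : ℕ, (1 - qpar z ^ (n + 1))‖ ^ 24)⁻¹ := by
  rw [Δ'_eq_qpar_mul_tprod_pow, div_mul_cancel_left₀ (qpar_ne_zero z), norm_inv, norm_pow]

/-- For `Im τ ≥ √3/2`, `|q/Δ(τ)| < 1.5`; in particular `Δ(τ) ≠ 0`. -/
theorem q_over_disc_bound (τ : ℂ) (hτ : Real.sqrt 3 / 2 ≤ τ.im) :
    ‖qpar τ / Δ' τ‖ < 1.5 ∧ Δ' τ ≠ 0 := by
  let z : ℍ := ⟨τ, (by positivity : (0 : ℝ) < Real.sqrt 3 / 2).trans_le hτ⟩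
  have hΔ : Δ' z ≠ 0 := (Δ'_eq_discriminant z).trans_ne (discriminant_ne_zero z)
  have hP := two_thirds_lt_norm_tprod_one_sub_pow_pow
    (norm_qpar_le_of_sqrt_three_div_two_le_im hτ)
  refine ⟨?_, hΔ⟩
  change ‖qpar z / Δ' z‖ < 1.5
  rw [norm_qpar_div_Δ', inv_lt_comm₀ (by linarith) (by norm_num)]
  norm_num
  linarith
end
end
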